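/- Let (X,d) be a compact metric space. For all ε > 0, the metric ε-dimension, the ε-width, and the topological dimension satisfy dim_ε(X,d) ≤ Widim_ε(X,d) ≤ 2 dim_ε(X,d) + 1, and dim_ε(X,d) ≤ dim(X). -/

import Mathlib

open scoped Classical

universe u

/-- A finite open cover of `Y`. -/
def IsFinOpenCover {Y : Type*} [TopologicalSpace Y] (α : Finset (Set Y)) : Prop :=
  (∀ U ∈ α, IsOpen U) ∧ ∀ y : Y, ∃ U ∈ α, y ∈ U

/-- Order of a finite cover. -/
noncomputable def coverOrd {Y : Type*} [TopologicalSpace Y] (α : Finset (Set Y)) : ℕ :=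
  sSup {c : ℕ | ∃ y : Y, (α.filter (fun U => y ∈ U)).card = c} - 1

/-- `β` refines `α`. -/
def Refines {Y : Type*} (β α : Finset (Set Y)) : Prop :=
  ∀ V ∈ β, ∃ U ∈ α, V ⊆ U

/-- `D(α)`: minimal order of a finite open cover refining `α`. -/
noncomputable def coverD {Y : Type*} [TopologicalSpace Y] (α : Finset (Set Y)) : ℕ :=
  sInf {c : ℕ | ∃ β : Finset (Set Y), IsFinOpenCover β ∧ Refines β α ∧ coverOrd β = c}

/-- Topological covering dimension `dim Y = sup_α D(α)`. -/
noncomputable def coverDim (Y : Type*) [TopologicalSpace Y] : ENNReal :=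
  ⨆ (α : Finset (Set Y)) (_ : IsFinOpenCover α), (coverD α : ENNReal)

/-- The metric `ε`-dimension: the infimum of `dim Y` over compact metrizable spaces `Y`
admitting a continuous `(d,ε)`-injective map `X → Y`. -/
noncomputable def dimEps (X : Type u) [MetricSpace X] (ε : ℝ) : ENNReal :=
  sInf {n : ENNReal | ∃ (Y : Type u) (_ : TopologicalSpace Y) (_ : CompactSpace Y)
    (_ : TopologicalSpace.MetrizableSpace Y) (f : X → Y), Continuous f ∧
    (∀ y : Y, Metric.diam (f ⁻¹' {y}) < ε) ∧ coverDim Y ≤ n}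

/-- The `ε`-width: the smallest `n` such that `X` admits a continuous `ε`-injective map
into an `n`-dimensional polyhedron (the space of a finite simplicial complex). -/
noncomputable def widimEps (X : Type u) [MetricSpace X] (ε : ℝ) : ENNReal :=
  sInf {n : ENNReal | ∃ (N : ℕ) (K : Geometry.SimplicialComplex ℝ (Fin N → ℝ)),
    K.faces.Finite ∧ coverDim ↥K.space ≤ n ∧
    ∃ f : X → ↥K.space, Continuous f ∧ ∀ p : ↥K.space, Metric.diam (f ⁻¹' {p}) < ε}

/-!
The first and last inequalities hold because a polyhedron, and `X` itself via the identity, are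
admissible targets in the definition of `dimEps`. For the middle one, let `f : X → Y` be
`ε`-injective with `dim Y ≤ n`. By compactness `Y` has a finite open cover whose preimages under
`f` have diameter `< ε`; refine it to a cover of order `≤ n + 1` and map `Y` to the nerve of the
refinement by a partition of unity. With the vertices on the moment curve in `ℝ^(2n+1)`, any two
simplices together span at most `2n + 2` affinely independent points, so barycentric coordinates
can be read off the image, and every fibre of the composite map lies in the preimage of a single
member of the cover. The polyhedron has dimension `≤ 2n + 1` by Lebesgue's staggered-cube covering
of `ℝ^(2n+1)`.
-/

open Finset Function Geometry
open scoped ENNReal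

lemma Refines.preimage {Y Z : Type*} {α β : Finset (Set Z)} (h : Refines β α) (e : Y → Z) :
    Refines (β.image (e ⁻¹' ·)) (α.image (e ⁻¹' ·)) := by
  simp only [Refines, Finset.forall_mem_image, Finset.exists_mem_image]
  intro V hV
  obtain ⟨U, hU, hVU⟩ := h V hV
  exact ⟨U, hU, Set.preimage_mono hVU⟩

section CoverDim

variable {Y Z : Type*} [TopologicalSpace Y] [TopologicalSpace Z]

lemma coverOrd_le_iff {β : Finset (Set Y)} {k : ℕ} :
    coverOrd β ≤ k ↔ ∀ y : Y, (β.filter (fun U => y ∈ U)).card ≤ k + 1 := by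
  have hbdd : BddAbove {c : ℕ | ∃ y : Y, (β.filter (fun U => y ∈ U)).card = c} :=
    ⟨β.card, by rintro _ ⟨y, rfl⟩; exact card_filter_le _ _⟩
  unfold coverOrd
  constructor
  · intro h y
    have := le_csSup hbdd ⟨y, rfl⟩
    omega
  · intro h
    have : sSup {c : ℕ | ∃ y : Y, (β.filter (fun U => y ∈ U)).card = c} ≤ k + 1 :=
      csSup_le' (by rintro _ ⟨y, rfl⟩; exact h y)
    omega

lemma coverD_le_iff {α : Finset (Set Y)} (hα : IsFinOpenCover α) {k : ℕ} :
    coverD α ≤ k ↔ ∃ β, IsFinOpenCover β ∧ Refines β α ∧ coverOrd β ≤ k := by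
  set S := {c : ℕ | ∃ β, IsFinOpenCover β ∧ Refines β α ∧ coverOrd β = c}
  change sInf S ≤ k ↔ _
  constructor
  · intro h
    obtain ⟨β, hβ, hβα, hord⟩ : sInf S ∈ S :=
      Nat.sInf_mem ⟨coverOrd α, α, hα, fun V hV => ⟨V, hV, le_rfl⟩, rfl⟩
    exact ⟨β, hβ, hβα, hord.trans_le h⟩
  · rintro ⟨β, hβ, hβα, hord⟩
    exact (Nat.sInf_le (⟨β, hβ, hβα, rfl⟩ : coverOrd β ∈ S)).trans hord

lemma coverDim_le_natCast_iff {k : ℕ} :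
    coverDim Y ≤ k ↔
      ∀ α : Finset (Set Y), IsFinOpenCover α →
        ∃ β, IsFinOpenCover β ∧ Refines β α ∧ coverOrd β ≤ k := by
  simp only [coverDim, iSup₂_le_iff, Nat.cast_le]
  exact forall₂_congr fun α hα => coverD_le_iff hα

lemma exists_coverDim_le_natCast_le {m : ℝ≥0∞} (hm : m ≠ ⊤) (h : coverDim Y ≤ m) :
    ∃ n : ℕ, coverDim Y ≤ n ∧ (n : ℝ≥0∞) ≤ m := by
  refine ⟨⌊m.toReal⌋₊, iSup₂_le fun α hα => ?_, ?_⟩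
  · have hαm : (coverD α : ℝ≥0∞) ≤ m :=
      (le_iSup₂ (f := fun α _ => (coverD α : ℝ≥0∞)) α hα).trans h
    exact Nat.cast_le.2 <| Nat.le_floor <| by simpa using ENNReal.toReal_mono hm hαm
  · exact (ENNReal.toReal_le_toReal (ENNReal.natCast_ne_top _) hm).1
      (by simpa using Nat.floor_le ENNReal.toReal_nonneg)

lemma IsFinOpenCover.preimage {α : Finset (Set Z)} (hα : IsFinOpenCover α) {e : Y → Z}
    (he : Continuous e) : IsFinOpenCover (α.image (e ⁻¹' ·)) := by
  refine ⟨by simpa using fun U hU => (hα.1 U hU).preimage he, fun y => ?_⟩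
  obtain ⟨U, hU, hyU⟩ := hα.2 (e y)
  exact ⟨_, mem_image_of_mem _ hU, hyU⟩

lemma coverOrd_image_preimage_le (β : Finset (Set Z)) (e : Y → Z) :
    coverOrd (β.image (e ⁻¹' ·)) ≤ coverOrd β :=
  coverOrd_le_iff.2 fun y => by
    rw [filter_image]
    exact card_image_le.trans (coverOrd_le_iff.1 le_rfl (e y))

lemma coverD_image_preimage_le {α : Finset (Set Z)} (hα : IsFinOpenCover α) {e : Y → Z}
    (he : Continuous e) : coverD (α.image (e ⁻¹' ·)) ≤ coverD α := by
  obtain ⟨β, hβ, hβα, hord⟩ := (coverD_le_iff hα).1 le_rfl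
  exact (coverD_le_iff (hα.preimage he)).2
    ⟨_, hβ.preimage he, hβα.preimage e, (coverOrd_image_preimage_le β e).trans hord⟩

lemma Homeomorph.coverDim_le (h : Y ≃ₜ Z) : coverDim Y ≤ coverDim Z :=
  iSup₂_le fun α hα => by
    have hα' := hα.preimage h.symm.continuous
    have hback : (α.image (h.symm ⁻¹' ·)).image (h ⁻¹' ·) = α := by
      simp [Finset.image_image, Function.comp_def, Set.preimage_preimage]
    calc (coverD α : ℝ≥0∞) = coverD ((α.image (h.symm ⁻¹' ·)).image (h ⁻¹' ·)) := by
          rw [hback]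
      _ ≤ coverD (α.image (h.symm ⁻¹' ·)) := by
        exact_mod_cast coverD_image_preimage_le hα' h.continuous
      _ ≤ coverDim Z := le_iSup₂ (f := fun α _ => (coverD α : ℝ≥0∞)) _ hα'

lemma exists_refines_coverOrd_le_of_colored_cover [CompactSpace Y] {κ : Type*} {k : ℕ}
    {α : Finset (Set Y)} (V : Fin (k + 1) → κ → Set Y) (hVo : ∀ c a, IsOpen (V c a))
    (hV : ∀ y, ∃ c a, y ∈ V c a) (hVα : ∀ c a, ∀ y ∈ V c a, ∃ U ∈ α, V c a ⊆ U)
    (hdisj : ∀ c, Pairwise (Disjoint on V c)) :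
    ∃ β, IsFinOpenCover β ∧ Refines β α ∧ coverOrd β ≤ k := by
  obtain ⟨t, ht⟩ := isCompact_univ.elim_finite_subcover (fun p : Fin (k + 1) × κ => V p.1 p.2)
    (fun p => hVo p.1 p.2) fun y _ => by
      obtain ⟨c, a, hy⟩ := hV y
      exact Set.mem_iUnion.2 ⟨(c, a), hy⟩
  set t' := t.filter fun p => (V p.1 p.2).Nonempty
  refine ⟨t'.image fun p => V p.1 p.2, ⟨?_, fun y => ?_⟩, ?_, coverOrd_le_iff.2 fun y => ?_⟩
  · simp only [Finset.forall_mem_image]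
    exact fun p _ => hVo p.1 p.2
  · obtain ⟨p, hp, hy⟩ := Set.mem_iUnion₂.1 (ht (Set.mem_univ y))
    exact ⟨_, mem_image_of_mem _ (mem_filter.2 ⟨hp, y, hy⟩), hy⟩
  · simp only [Refines, Finset.forall_mem_image]
    rintro p hp
    obtain ⟨y, hy⟩ := (mem_filter.1 hp).2
    exact hVα p.1 p.2 y hy
  · rw [filter_image]
    refine card_image_le.trans ?_
    calc _ ≤ (univ : Finset (Fin (k + 1))).card := by
          refine card_le_card_of_injOn Prod.fst (fun _ _ => mem_coe.2 (mem_univ _)) ?_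
          intro p hp q hq hpq
          have hyp := (mem_filter.1 (mem_coe.1 hp)).2
          have hyq := (mem_filter.1 (mem_coe.1 hq)).2
          by_contra hne
          have hne₂ : p.2 ≠ q.2 := fun h => hne (Prod.ext hpq h)
          exact (hdisj p.1 hne₂).le_bot ⟨hyp, hpq ▸ hyq⟩
      _ = k + 1 := by simp

end CoverDim

section StaggeredCubes

variable {N : ℕ}

/-- The open unit cubes of the integer grid in `ℝ^N` translated by `c / (N + 1)` in every
coordinate; as `c` ranges over `Fin (N + 1)` these are `N + 1` staggered grids. -/
def staggeredCube (c : Fin (N + 1)) (k : Fin N → ℤ) : Set (Fin N → ℝ) :=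
  {x | ∀ j, x j - c / (N + 1) ∈ Set.Ioo (k j : ℝ) (k j + 1)}

lemma isOpen_staggeredCube (c : Fin (N + 1)) (k : Fin N → ℤ) : IsOpen (staggeredCube c k) := by
  simp only [staggeredCube, Set.ofPred_forall]
  exact isOpen_iInter_of_finite fun j =>
    isOpen_Ioo.preimage ((continuous_apply j).sub continuous_const)

lemma pairwise_disjoint_staggeredCube (c : Fin (N + 1)) :
    Pairwise (Disjoint on staggeredCube c) := by
  have floor_eq : ∀ {k x}, x ∈ staggeredCube c k → ∀ j, ⌊x j - c / (N + 1)⌋ = k j :=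
    fun hx j => Int.floor_eq_iff.2 ⟨(hx j).1.le, (hx j).2⟩
  intro k k' hkk'
  refine Set.disjoint_left.2 fun x hx hx' => hkk' (funext fun j => ?_)
  rw [← floor_eq hx j, floor_eq hx' j]

lemma dist_le_one_of_mem_staggeredCube {c : Fin (N + 1)} {k : Fin N → ℤ} {x y : Fin N → ℝ}
    (hx : x ∈ staggeredCube c k) (hy : y ∈ staggeredCube c k) : dist x y ≤ 1 := by
  refine (dist_pi_le_iff zero_le_one).2 fun j => ?_
  have := hx j
  have := hy j
  simp only [Set.mem_Ioo] at *
  rw [Real.dist_eq, abs_le]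
  constructor <;> linarith

/-- The pigeonhole step: a coordinate `x j` can sit on the boundary of the grid for at most one
shift `c`, since two shifts differ by less than `1`. -/
lemma exists_shift_forall_sub_ne_intCast (x : Fin N → ℝ) :
    ∃ c : Fin (N + 1), ∀ j (m : ℤ), x j - c / (N + 1) ≠ m := by
  by_contra! h
  choose j m hm using h
  obtain ⟨c, c', hcc', hj⟩ := Fintype.exists_ne_map_eq_of_card_lt j (by simp)
  have hdiff : ((m c - m c' : ℤ) : ℝ) = ((c' : ℝ) - c) / (N + 1) := by
    push_cast
    rw [← hm c, ← hm c', hj]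
    ring
  have hsmall : |((c' : ℝ) - c) / (N + 1)| < 1 := by
    have hc : (c : ℝ) ≤ N := by exact_mod_cast Fin.is_le c
    have hc' : (c' : ℝ) ≤ N := by exact_mod_cast Fin.is_le c'
    rw [abs_div, abs_of_pos (show (0 : ℝ) < N + 1 by positivity), div_lt_one (by positivity),
      abs_sub_lt_iff]
    constructor <;> linarith [(c : ℕ).cast_nonneg (α := ℝ), (c' : ℕ).cast_nonneg (α := ℝ)]
  have hm_eq : m c - m c' = 0 :=
    Int.abs_lt_one_iff.1 (by rw [← hdiff] at hsmall; exact_mod_cast hsmall)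
  rw [hm_eq, Int.cast_zero, eq_comm, div_eq_zero_iff, sub_eq_zero] at hdiff
  exact hcc' (Fin.ext (by exact_mod_cast (hdiff.resolve_right (by positivity)).symm))

lemma exists_mem_staggeredCube (x : Fin N → ℝ) : ∃ c k, x ∈ staggeredCube c k := by
  obtain ⟨c, hc⟩ := exists_shift_forall_sub_ne_intCast x
  refine ⟨c, fun j => ⌊x j - c / (N + 1)⌋, fun j => ⟨?_, Int.lt_floor_add_one _⟩⟩
  exact (Int.floor_le _).lt_of_ne (hc j _).symm

/-- Lebesgue's covering argument: the staggered cubes of side `δ / 2`, `δ` a Lebesgue number,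
form a refinement in which each point meets at most one cube of each of the `N + 1` grids. -/
theorem coverDim_le_of_isCompact {P : Set (Fin N → ℝ)} (hP : IsCompact P) :
    coverDim P ≤ N := by
  have : CompactSpace P := isCompact_iff_compactSpace.1 hP
  refine coverDim_le_natCast_iff.2 fun α hα => ?_
  obtain ⟨δ, hδ, hleb⟩ := lebesgue_number_lemma_of_metric isCompact_univ
    (c := fun U : α => (U : Set P)) (fun U => hα.1 _ U.2) fun y _ => by
      obtain ⟨U, hU, hyU⟩ := hα.2 y
      exact Set.mem_iUnion.2 ⟨⟨U, hU⟩, hyU⟩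
  have hscale : Continuous fun y : P => (δ / 2)⁻¹ • (y : Fin N → ℝ) := by fun_prop
  refine exists_refines_coverOrd_le_of_colored_cover
    (fun c k => (fun y : P => (δ / 2)⁻¹ • (y : Fin N → ℝ)) ⁻¹' staggeredCube c k)
    (fun c k => (isOpen_staggeredCube c k).preimage hscale)
    (fun y => exists_mem_staggeredCube _)
    (fun c k y hy => ?_)
    (fun c k k' hkk' => (pairwise_disjoint_staggeredCube c hkk').preimage _)
  obtain ⟨U, hU⟩ := hleb y (Set.mem_univ y)
  refine ⟨U, U.2, fun z hz => hU ?_⟩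
  have hzy := dist_le_one_of_mem_staggeredCube hz hy
  rw [dist_smul₀, Real.norm_eq_abs, abs_of_pos (by positivity), inv_mul_le_iff₀ (by positivity),
    mul_one] at hzy
  rw [Metric.mem_ball, Subtype.dist_eq]
  linarith

end StaggeredCubes

section MomentCurve

variable {K : Type*} [Field K] {ι : Type*} {N : ℕ}

def momentCurve (N : ℕ) (t : K) : Fin N → K := fun d => t ^ ((d : ℕ) + 1)

/-- Pairing the relations with the Lagrange basis polynomial of `i`, which has degree `< N + 1`,
isolates `w i`. -/
lemma eq_zero_of_sum_mul_pow_eq_zero {s : Finset ι} {t : ι → K} (ht : Set.InjOn t s)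
    (hs : s.card ≤ N + 1) {w : ι → K} (hw : ∀ d ≤ N, ∑ i ∈ s, w i * t i ^ d = 0) :
    ∀ i ∈ s, w i = 0 := by
  intro i hi
  set p := Lagrange.basis s t i
  have hdeg : p.natDegree < N + 1 := by
    rw [Lagrange.natDegree_basis ht hi]
    have := card_pos.2 ⟨i, hi⟩
    omega
  calc w i = ∑ j ∈ s, w j * p.eval (t j) := by
        rw [sum_eq_single_of_mem i hi fun j hj hji => by
          rw [Lagrange.eval_basis_of_ne hji.symm hj, mul_zero]]
        rw [Lagrange.eval_basis_self ht hi, mul_one]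
    _ = ∑ d ∈ range (N + 1), p.coeff d * ∑ j ∈ s, w j * t j ^ d := by
        simp only [Polynomial.eval_eq_sum_range' hdeg, mul_sum]
        rw [sum_comm]
        exact sum_congr rfl fun d _ => sum_congr rfl fun j _ => by ring
    _ = 0 := sum_eq_zero fun d hd => by
        rw [hw d (Nat.lt_succ_iff.1 (mem_range.1 hd)), mul_zero]

lemma eq_zero_of_sum_smul_momentCurve_eq_zero {s : Finset ι} {t : ι → K} (ht : Set.InjOn t s)
    (hs : s.card ≤ N + 1) {w : ι → K} (hw₀ : ∑ i ∈ s, w i = 0)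
    (hw : ∑ i ∈ s, w i • momentCurve N (t i) = 0) : ∀ i ∈ s, w i = 0 := by
  refine eq_zero_of_sum_mul_pow_eq_zero ht hs fun d hd => ?_
  rcases d with _ | d
  · simpa using hw₀
  · simpa [momentCurve] using congrFun hw ⟨d, hd⟩

lemma affineIndependent_of_subset_range_momentCurve {S : Finset (Fin N → K)}
    (hS : (S : Set (Fin N → K)) ⊆ Set.range (momentCurve N)) (hcard : S.card ≤ N + 1) :
    AffineIndependent K ((↑) : S → Fin N → K) := by
  choose t ht using fun p : S => hS p.2
  rw [affineIndependent_iff]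
  intro s w hw₀ hw
  simp only [← ht] at hw
  refine eq_zero_of_sum_smul_momentCurve_eq_zero (t := t) (fun p _ q _ hpq => ?_) ?_ hw₀ hw
  · exact Subtype.ext (by rw [← ht p, ← ht q, hpq])
  · exact (card_le_univ s).trans (by simpa using hcard)

end MomentCurve

section Nerve

variable {Y ι : Type*} [Fintype ι] (U : ι → Set Y) (n : ℕ) (t : ι → ℝ)

/-- The vertex set of the simplex of the nerve of `U` carrying `y`, the vertex of `U i` being
`momentCurve (2n+1) (t i)`. -/
noncomputable def nerveVertices (y : Y) : Finset (Fin (2 * n + 1) → ℝ) :=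
  (univ.filter fun i => y ∈ U i).image fun i => momentCurve (2 * n + 1) (t i)

variable {U n t}

/-- Two simplices of the nerve together have at most `2n + 2` vertices, so lie in general position
on the moment curve in `ℝ^(2n+1)`. -/
lemma affineIndependent_of_subset_nerveVertices_union
    (hord : ∀ y, (univ.filter fun i => y ∈ U i).card ≤ n + 1) {S : Finset (Fin (2 * n + 1) → ℝ)}
    {y y' : Y} (hS : S ⊆ nerveVertices U n t y ∪ nerveVertices U n t y') :
    AffineIndependent ℝ ((↑) : S → Fin (2 * n + 1) → ℝ) := by
  refine affineIndependent_of_subset_range_momentCurve (fun p hp => ?_) ?_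
  · rcases mem_union.1 (hS hp) with hp | hp <;>
    · obtain ⟨i, -, rfl⟩ := mem_image.1 hp
      exact Set.mem_range_self _
  · calc S.card ≤ (nerveVertices U n t y ∪ nerveVertices U n t y').card := card_le_card hS
      _ ≤ (n + 1) + (n + 1) := (card_union_le _ _).trans <|
          add_le_add (card_image_le.trans (hord y)) (card_image_le.trans (hord y'))
      _ = 2 * n + 1 + 1 := by ring

/-- The nerve of the cover `U`, realised in `ℝ^(2n+1)` with vertices on the moment curve. -/
noncomputable def momentNerve (hord : ∀ y, (univ.filter fun i => y ∈ U i).card ≤ n + 1) :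
    SimplicialComplex ℝ (Fin (2 * n + 1) → ℝ) :=
  .ofErase {S | ∃ y, S ⊆ nerveVertices U n t y}
    (fun _ ⟨y, hS⟩ => affineIndependent_of_subset_nerveVertices_union hord (y' := y)
      (hS.trans subset_union_left))
    (fun _ _ hS'S ⟨y, hS⟩ => ⟨y, hS'S.trans hS⟩)
    (fun _ ⟨_, hS⟩ _ ⟨_, hS'⟩ => ((affineIndependent_of_subset_nerveVertices_union hord
      (union_subset_union hS hS')).convexHull_inter subset_union_left subset_union_right).ge)

lemma mem_momentNerve_faces (hord : ∀ y, (univ.filter fun i => y ∈ U i).card ≤ n + 1)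
    {S : Finset (Fin (2 * n + 1) → ℝ)} :
    S ∈ (momentNerve (t := t) hord).faces ↔ (∃ y, S ⊆ nerveVertices U n t y) ∧ S ≠ ∅ :=
  Iff.rfl

lemma momentNerve_faces_finite (hord : ∀ y, (univ.filter fun i => y ∈ U i).card ≤ n + 1) :
    (momentNerve (t := t) hord).faces.Finite := by
  refine ((univ.image fun i => momentCurve (2 * n + 1) (t i)).powerset.finite_toSet).subset ?_
  rintro S hS
  obtain ⟨⟨y, hS⟩, -⟩ := (mem_momentNerve_faces hord).1 hS
  exact mem_powerset.2 (hS.trans (image_subset_image (filter_subset _ _)))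

lemma sum_smul_mem_momentNerve_space (hord : ∀ y, (univ.filter fun i => y ∈ U i).card ≤ n + 1)
    {w : ι → ℝ} {y : Y} (hw₀ : ∀ i, 0 ≤ w i) (hw₁ : ∑ i, w i = 1)
    (hwU : ∀ i, w i ≠ 0 → y ∈ U i) :
    ∑ i, w i • momentCurve (2 * n + 1) (t i) ∈ (momentNerve (t := t) hord).space := by
  obtain ⟨i, -, hi⟩ := exists_ne_zero_of_sum_ne_zero (hw₁ ▸ one_ne_zero : ∑ i, w i ≠ 0)
  have hface : nerveVertices U n t y ∈ (momentNerve (t := t) hord).faces :=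
    (mem_momentNerve_faces hord).2 ⟨⟨y, subset_rfl⟩,
      ne_empty_of_mem (mem_image_of_mem _ (mem_filter.2 ⟨mem_univ i, hwU i hi⟩))⟩
  refine SimplicialComplex.convexHull_subset_space hface ?_
  rw [← sum_filter_of_ne (p := fun i => y ∈ U i) fun i _ h => hwU i (left_ne_zero_of_smul h)]
  rw [← sum_filter_of_ne (p := fun i => y ∈ U i) fun i _ h => hwU i h] at hw₁
  exact (convex_convexHull ℝ _).sum_mem (fun i _ => hw₀ i) hw₁ fun i hi =>
    subset_convexHull ℝ _ (mem_image_of_mem _ hi)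

/-- Barycentric coordinates on the nerve are well defined. -/
lemma eq_of_sum_smul_momentCurve_eq (ht : Injective t)
    (hord : ∀ y, (univ.filter fun i => y ∈ U i).card ≤ n + 1) {w w' : ι → ℝ} {y y' : Y}
    (hw : ∀ i, w i ≠ 0 → y ∈ U i) (hw' : ∀ i, w' i ≠ 0 → y' ∈ U i) (h₁ : ∑ i, w i = ∑ i, w' i)
    (h : ∑ i, w i • momentCurve (2 * n + 1) (t i) = ∑ i, w' i • momentCurve (2 * n + 1) (t i)) :
    w = w' := by
  set s := (univ.filter fun i => y ∈ U i) ∪ (univ.filter fun i => y' ∈ U i)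
  have hout : ∀ i ∉ s, w i = 0 ∧ w' i = 0 := fun i hi => by
    simp only [s, mem_union, mem_filter, mem_univ, true_and, not_or] at hi
    exact ⟨by_contra (hi.1 ∘ hw i), by_contra (hi.2 ∘ hw' i)⟩
  have hcard : s.card ≤ 2 * n + 1 + 1 := (card_union_le _ _).trans <| by
    have := hord y
    have := hord y'
    omega
  have hzero := eq_zero_of_sum_smul_momentCurve_eq_zero (t := t) ht.injOn hcard (w := w - w')
    (by rw [sum_subset (subset_univ s) fun i _ hi => by simp [hout i hi]]
        simp [sum_sub_distrib, h₁])
    (by rw [sum_subset (subset_univ s) fun i _ hi => by simp [hout i hi]]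
        simp [sub_smul, sum_sub_distrib, h])
  funext i
  by_cases hi : i ∈ s
  · exact sub_eq_zero.1 (hzero i hi)
  · rw [(hout i hi).1, (hout i hi).2]

/-- `g` is the barycentric map of a partition of unity subordinate to the cover. -/
theorem exists_polyhedron_map_fiber_subset [TopologicalSpace Y] [NormalSpace Y]
    [ParacompactSpace Y] (hUo : ∀ i, IsOpen (U i)) (hU : ∀ y, ∃ i, y ∈ U i)
    (hord : ∀ y, (univ.filter fun i => y ∈ U i).card ≤ n + 1) :
    ∃ K : SimplicialComplex ℝ (Fin (2 * n + 1) → ℝ), K.faces.Finite ∧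
      ∃ g : Y → K.space, Continuous g ∧ ∀ y, ∃ i, g ⁻¹' {g y} ⊆ U i := by
  obtain ⟨ρ, hρU⟩ := PartitionOfUnity.exists_isSubordinate isClosed_univ U hUo
    fun y _ => Set.mem_iUnion.2 (hU y)
  have hρ₁ : ∀ y, ∑ i, ρ i y = 1 := fun y => by
    simpa [finsum_eq_sum_of_fintype] using ρ.sum_eq_one (Set.mem_univ y)
  have hρU' : ∀ i y, ρ i y ≠ 0 → y ∈ U i := fun i y h => hρU i (subset_tsupport _ h)
  set t : ι → ℝ := fun i => (Fintype.equivFin ι i : ℕ)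
  have ht : Injective t :=
    Nat.cast_injective.comp (Fin.val_injective.comp (Fintype.equivFin ι).injective)
  let g : Y → (momentNerve (t := t) hord).space := fun y =>
    ⟨∑ i, ρ i y • momentCurve _ (t i),
      sum_smul_mem_momentNerve_space hord (fun i => ρ.nonneg i y) (hρ₁ y) (hρU' · y)⟩
  refine ⟨momentNerve hord, momentNerve_faces_finite hord, g, ?_, fun y => ?_⟩
  · exact (continuous_finsetSum _ fun i _ => (ρ i).continuous.smul continuous_const).subtype_mk _
  · obtain ⟨i, -, hi⟩ := exists_ne_zero_of_sum_ne_zero ((hρ₁ y).symm ▸ one_ne_zero :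
      ∑ i, ρ i y ≠ 0)
    refine ⟨i, fun y' hy' => hρU' i y' ?_⟩
    have hρ := eq_of_sum_smul_momentCurve_eq ht hord (hρU' · y) (hρU' · y')
      (by rw [hρ₁, hρ₁]) (congrArg Subtype.val hy').symm
    rwa [← congrFun hρ i]

end Nerve

lemma Geometry.SimplicialComplex.isCompact_space {N : ℕ} {K : SimplicialComplex ℝ (Fin N → ℝ)}
    (hK : K.faces.Finite) : IsCompact K.space :=
  hK.isCompact_biUnion fun S _ => S.finite_toSet.isCompact_convexHull ℝ

section EpsInjective

variable {Y : Type*} [TopologicalSpace Y] {ε : ℝ}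

/-- A small neighbourhood of the fibre stays of diameter `< ε`, and, `f` being a closed map, it
contains the preimage of a neighbourhood of `y`. -/
lemma exists_isOpen_mem_diam_preimage_lt {X : Type*} [MetricSpace X] [CompactSpace X]
    [T2Space Y] {f : X → Y} (hf : Continuous f) {y : Y} (hy : Metric.diam (f ⁻¹' {y}) < ε) :
    ∃ W, IsOpen W ∧ y ∈ W ∧ Metric.diam (f ⁻¹' W) < ε := by
  set η := (ε - Metric.diam (f ⁻¹' {y})) / 3
  have hη : 0 < η := by simp only [η]; linarith
  set V := Metric.thickening η (f ⁻¹' {y})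
  refine ⟨(f '' Vᶜ)ᶜ, (hf.isClosedMap _ Metric.isOpen_thickening.isClosed_compl).isOpen_compl,
    fun ⟨x, hxV, hxy⟩ => hxV (Metric.self_subset_thickening hη _ hxy), ?_⟩
  have hsub : f ⁻¹' (f '' Vᶜ)ᶜ ⊆ V := fun x hx => by_contra fun hxV => hx ⟨x, hxV, rfl⟩
  calc Metric.diam (f ⁻¹' (f '' Vᶜ)ᶜ) ≤ Metric.diam V :=
        Metric.diam_mono hsub Metric.isBounded_of_compactSpace
    _ ≤ Metric.diam (f ⁻¹' {y}) + 2 * η := Metric.diam_thickening_le _ hη.le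
    _ < ε := by simp only [η]; linarith

lemma exists_isFinOpenCover_diam_preimage_lt {X : Type*} [MetricSpace X] [CompactSpace X]
    [CompactSpace Y] [T2Space Y] {f : X → Y} (hf : Continuous f)
    (hfε : ∀ y, Metric.diam (f ⁻¹' {y}) < ε) :
    ∃ α : Finset (Set Y), IsFinOpenCover α ∧ ∀ U ∈ α, Metric.diam (f ⁻¹' U) < ε := by
  choose W hWo hyW hW using fun y => exists_isOpen_mem_diam_preimage_lt hf (hfε y)
  obtain ⟨t, ht⟩ := CompactSpace.elim_nhds_subcover W fun y => (hWo y).mem_nhds (hyW y)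
  refine ⟨t.image W, ⟨by simpa using fun y _ => hWo y, fun y => ?_⟩,
    by simpa using fun y _ => hW y⟩
  obtain ⟨x, hx, hyx⟩ := Set.mem_iUnion₂.1 (ht.ge (Set.mem_univ y))
  exact ⟨W x, mem_image_of_mem W hx, hyx⟩

/-- Compose `f` with the nerve map of a cover of order `≤ n + 1` refining one whose preimages have
diameter `< ε`. -/
theorem widimEps_le_of_coverDim_le {X : Type u} [MetricSpace X] [CompactSpace X]
    [CompactSpace Y] [T2Space Y] {f : X → Y} (hf : Continuous f) (hε : 0 < ε)
    (hfε : ∀ y, Metric.diam (f ⁻¹' {y}) < ε) {n : ℕ} (hY : coverDim Y ≤ n) :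
    widimEps X ε ≤ 2 * n + 1 := by
  obtain ⟨α, hα, hαε⟩ := exists_isFinOpenCover_diam_preimage_lt hf hfε
  obtain ⟨β, hβ, hβα, hord⟩ := coverDim_le_natCast_iff.1 hY α hα
  have hβord : ∀ y, (univ.filter fun V : β => y ∈ (V : Set Y)).card ≤ n + 1 := fun y =>
    (card_le_card_of_injOn Subtype.val (fun V hV => by simpa using hV)
      Subtype.val_injective.injOn).trans (coverOrd_le_iff.1 hord y)
  obtain ⟨K, hK, g, hg, hgβ⟩ := exists_polyhedron_map_fiber_subset (U := ((↑) : β → Set Y))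
    (fun V => hβ.1 V V.2) (fun y => by simpa using hβ.2 y) hβord
  have hKdim : coverDim K.space ≤ (2 * n + 1 : ℕ) :=
    coverDim_le_of_isCompact (SimplicialComplex.isCompact_space hK)
  refine sInf_le ⟨2 * n + 1, K, hK, by exact_mod_cast hKdim, g ∘ f, hg.comp hf, fun p => ?_⟩
  rcases (g ∘ f ⁻¹' {p}).eq_empty_or_nonempty with hp | ⟨x, rfl⟩
  · simpa [hp] using hε
  obtain ⟨V, hVg⟩ := hgβ (f x)
  obtain ⟨U, hU, hVU⟩ := hβα V V.2
  calc Metric.diam (g ∘ f ⁻¹' {g (f x)}) ≤ Metric.diam (f ⁻¹' U) :=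
        Metric.diam_mono (fun x' hx' => hVU (hVg hx')) Metric.isBounded_of_compactSpace
    _ < ε := hαε U hU

end EpsInjective

theorem dimEps_le_coverDim (X : Type u) [MetricSpace X] [CompactSpace X] {ε : ℝ} (hε : 0 < ε) :
    dimEps X ε ≤ coverDim X :=
  sInf_le ⟨X, _, ‹_›, inferInstance, id, continuous_id, fun x => by simpa using hε, le_rfl⟩

theorem dimEps_le_widimEps (X : Type u) [MetricSpace X] (ε : ℝ) : dimEps X ε ≤ widimEps X ε := by
  refine le_sInf ?_
  rintro w ⟨N, K, hK, hKw, f, hf, hfε⟩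
  have : CompactSpace K.space :=
    isCompact_iff_compactSpace.1 (SimplicialComplex.isCompact_space hK)
  have : TopologicalSpace.MetrizableSpace (ULift.{u} K.space) :=
    Homeomorph.ulift.isEmbedding.metrizableSpace
  refine sInf_le ⟨ULift.{u} K.space, _, inferInstance, this, ULift.up ∘ f,
    continuous_uliftUp.comp hf, fun p => ?_, Homeomorph.ulift.coverDim_le.trans hKw⟩
  have hfiber : ULift.up ∘ f ⁻¹' {p} = f ⁻¹' {p.down} := by
    ext x
    simp [ULift.ext_iff]
  simpa [hfiber] using hfε p.down

/-- `m ↦ 2m + 1` commutes with the infimum defining `dimEps`, so it suffices to bound `widimEps`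
by `2m + 1` for each admissible target of dimension `≤ m`, and there `m` may be rounded down
since covering dimensions are integers. -/
theorem widimEps_le_two_mul_dimEps_add_one (X : Type u) [MetricSpace X] [CompactSpace X]
    {ε : ℝ} (hε : 0 < ε) : widimEps X ε ≤ 2 * dimEps X ε + 1 := by
  have hmono : Monotone fun m : ℝ≥0∞ => 2 * m + 1 := fun _ _ hab => by
    dsimp only
    gcongr
  have hcont : Continuous fun m : ℝ≥0∞ => 2 * m + 1 :=
    (ENNReal.continuous_const_mul (by norm_num)).add continuous_const
  rw [dimEps, hmono.map_sInf_of_continuousAt hcont.continuousAt (by simp)]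
  refine le_sInf ?_
  rintro _ ⟨m, ⟨Y, _, _, _, f, hf, hfε, hYm⟩, rfl⟩
  rcases eq_or_ne m ⊤ with rfl | hm
  · simp
  obtain ⟨n, hYn, hnm⟩ := exists_coverDim_le_natCast_le hm hYm
  exact (widimEps_le_of_coverDim_le hf hε hfε hYn).trans (hmono hnm)

theorem dimEps_widim_ineqs (X : Type u) [MetricSpace X] [CompactSpace X]
    (ε : ℝ) (hε : 0 < ε) :
    dimEps X ε ≤ widimEps X ε ∧ widimEps X ε ≤ 2 * dimEps X ε + 1 ∧
      dimEps X ε ≤ coverDim X :=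
  ⟨dimEps_le_widimEps X ε, widimEps_le_two_mul_dimEps_add_one X hε, dimEps_le_coverDim X hε⟩
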